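/- By induction on k: for the characteristic function Φ(Y) = [¬φ]·X + [φ]·wp⟦C'⟧(Y) of a probabilistic while loop (with the loop body satisfying the point-mass decomposition property), the k-fold iterate from 0 satisfies Φᵏ(0)(σ₀) = ∑_{σ₁ ∈ Σ} Φᵏ_{[σ₁]}(0)(σ₀) · X(σ₁), where Φ_{[σ₁]} is the characteristic function with postexpectation the point-mass [σ₁] in place of X. -/
import Mathlib


open ENNReal NNReal

/-- Loop-free probabilistic guarded commands over a state space `S`:
skip, assignments (state updates), sequencing, probabilistic choice with
rational probability, and conditionals. -/
inductive PGCL (S : Type) : Type where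
  | skip : PGCL S
  | assign (u : S → S) : PGCL S
  | seq (c₁ c₂ : PGCL S) : PGCL S
  | prob (p : NNRat) (c₁ c₂ : PGCL S) : PGCL S
  | ite (φ : S → Bool) (c₁ c₂ : PGCL S) : PGCL S

/-- The weakest preexpectation transformer, satisfying the standard compositional rules:
wp⟦skip⟧(X) = X, wp⟦x:=a⟧(X) = X∘update, wp⟦C₁;C₂⟧(X) = wp⟦C₁⟧(wp⟦C₂⟧(X)),
wp⟦C₁[p]C₂⟧(X) = p·wp⟦C₁⟧(X) + (1−p)·wp⟦C₂⟧(X),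
wp⟦if φ then C₁ else C₂⟧(X) = [φ]·wp⟦C₁⟧(X) + [¬φ]·wp⟦C₂⟧(X). -/
noncomputable def wp {S : Type} : PGCL S → (S → ℝ≥0∞) → (S → ℝ≥0∞)
  | .skip, X => X
  | .assign u, X => fun σ => X (u σ)
  | .seq c₁ c₂, X => wp c₁ (wp c₂ X)
  | .prob p c₁ c₂, X => fun σ =>
      ((p : ℝ≥0) : ℝ≥0∞) * wp c₁ X σ + (1 - ((p : ℝ≥0) : ℝ≥0∞)) * wp c₂ X σ
  | .ite φ c₁ c₂, X => fun σ => if φ σ then wp c₁ X σ else wp c₂ X σ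

/-- The point-mass expectation of a state `σ'`: the Iverson bracket of the
characteristic predicate of `σ'` (states modulo agreement on the relevant variables). -/
noncomputable def pointMass {S : Type} [DecidableEq S] (σ' : S) : S → ℝ≥0∞ :=
  fun τ => if τ = σ' then 1 else 0

/-- The characteristic function Φ_g of the loop while(φ){C'} with postexpectation g:
Φ_g(Y) = [¬φ]·g + [φ]·wp⟦C'⟧(Y). -/
noncomputable def loopIter {S : Type} (φ : S → Bool) (C' : PGCL S) (g : S → ℝ≥0∞) :
    (S → ℝ≥0∞) → (S → ℝ≥0∞) :=
  fun Y σ => if φ σ then wp C' Y σ else g σ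

/-- For every k, the k-fold Kleene iterate of the characteristic function from 0 satisfies
Φᵏ(0)(σ₀) = ∑_{σ₁} Φ_{[σ₁]}ᵏ(0)(σ₀) · X(σ₁), provided the loop body satisfies the
point-mass decomposition property. -/
theorem stmt17 {S : Type} [Countable S] [DecidableEq S]
    (φ : S → Bool) (C' : PGCL S)
    (hdec : ∀ (g : S → ℝ≥0∞) (σ : S),
      wp C' g σ = ∑' σ' : S, wp C' (pointMass σ') σ * g σ')
    (X : S → ℝ≥0∞) (k : ℕ) (σ₀ : S) :
    (loopIter φ C' X)^[k] ⊥ σ₀ =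
      ∑' σ₁ : S, (loopIter φ C' (pointMass σ₁))^[k] ⊥ σ₀ * X σ₁ := by
  induction k generalizing σ₀ with
  | zero => simp
  | succ k ih =>
    simp only [Function.iterate_succ_apply', loopIter]
    by_cases h : φ σ₀ = true
    · simp only [h, if_true]
      rw [hdec]
      calc ∑' σ' : S, wp C' (pointMass σ') σ₀ * (loopIter φ C' X)^[k] ⊥ σ'
          = ∑' σ' : S, ∑' σ₁ : S,
              wp C' (pointMass σ') σ₀ * ((loopIter φ C' (pointMass σ₁))^[k] ⊥ σ' * X σ₁) := by
            congr 1; funext σ'; rw [ih σ', ENNReal.tsum_mul_left]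
        _ = ∑' σ₁ : S, ∑' σ' : S,
              wp C' (pointMass σ') σ₀ * ((loopIter φ C' (pointMass σ₁))^[k] ⊥ σ' * X σ₁) :=
            ENNReal.tsum_comm
        _ = ∑' σ₁ : S, wp C' ((loopIter φ C' (pointMass σ₁))^[k] ⊥) σ₀ * X σ₁ := by
            congr 1; funext σ₁
            rw [hdec ((loopIter φ C' (pointMass σ₁))^[k] ⊥) σ₀]
            simp_rw [← mul_assoc]
            rw [ENNReal.tsum_mul_right]
    · simp only [h, if_false, Bool.false_eq_true]
      rw [show X σ₀ = ∑' σ₁ : S, pointMass σ₁ σ₀ * X σ₁ by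
        rw [tsum_eq_single σ₀ (by intro b hb; simp [pointMass, Ne.symm hb])]
        simp [pointMass]]
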